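/- For every A > 0: (i) E_A(λ) − (1/√2)·[[−1, i],[i, −1]] = O(1/|λ|) as λ → ∞ within the open upper half-plane {Im λ > 0}; and (ii) E_A(λ) − (1/√2)·[[1, i],[i, 1]] = O(1/|λ|) as λ → ∞ within the open lower half-plane {Im λ < 0}. -/

import Mathlib

open Complex Matrix MeasureTheory Filter

noncomputable def csqrt (z : ℂ) : ℂ := z ^ (1/2 : ℂ)

noncomputable def sB (w : ℂ) : ℂ := Complex.I * csqrt (-w)

def SigmaSet (A : ℝ) : Set ℂ := Complex.ofReal '' (Set.Iic (-(1/A)) ∪ Set.Ici (1/A))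

noncomputable def kA (A : ℝ) (l : ℂ) : ℂ := Complex.I * csqrt (1/(A:ℂ)^2 - l^2)

noncomputable def DA (A : ℝ) (l : ℂ) : Matrix (Fin 2) (Fin 2) ℂ :=
  (((Real.sqrt 2 : ℝ) : ℂ)⁻¹ * sB (1/(Complex.I * (A:ℂ) * kA A l) - 1)) •
    !![l * (A:ℂ) / (1 - Complex.I * (A:ℂ) * kA A l), -1;
       -1, l * (A:ℂ) / (1 - Complex.I * (A:ℂ) * kA A l)]

noncomputable def EA (A : ℝ) (l : ℂ) : Matrix (Fin 2) (Fin 2) ℂ :=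
  (((Real.sqrt 2 : ℝ) : ℂ)⁻¹ * sB (1/(Complex.I * (A:ℂ) * kA A l) - 1)) •
    !![l * (A:ℂ) / (1 - Complex.I * (A:ℂ) * kA A l), 1;
       1, l * (A:ℂ) / (1 - Complex.I * (A:ℂ) * kA A l)]

def sigma1 : Matrix (Fin 2) (Fin 2) ℂ := !![0, 1; 1, 0]
def sigma2 : Matrix (Fin 2) (Fin 2) ℂ := !![0, -Complex.I; Complex.I, 0]
def sigma3 : Matrix (Fin 2) (Fin 2) ℂ := !![1, 0; 0, -1]

attribute [local instance] Matrix.normedAddCommGroup Matrix.normedSpace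

/-! Let `ζ = ±i` be chosen with `Re (ζλ) < 0`. The principal root `√(1/A² − λ²)` has nonnegative
real part, and comparing imaginary parts of its square shows that it lies in the same closed
quadrant as `−ζλ`; hence `‖√(1/A² − λ²) − ζλ‖ ≥ ‖λ‖`, and the factorization
`(√(1/A² − λ²) + ζλ)(√(1/A² − λ²) − ζλ) = 1/A²` gives `i A k_A(λ) = ζAλ + O(1/‖λ‖)`.
Consequently `s(1/(i A k_A(λ)) − 1) = i + O(1/‖λ‖)` and `λA/(1 − i A k_A(λ)) = ζ + O(1/‖λ‖)`,
so every entry of `E_A(λ)` is within `O(1/‖λ‖)` of the corresponding entry of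
`(1/√2)·[[iζ, i], [i, iζ]]`. -/

lemma csqrt_sq (z : ℂ) : csqrt z ^ 2 = z := by
  rw [csqrt, one_div]
  exact cpow_ofNat_inv_pow z 2

lemma csqrt_re_nonneg (z : ℂ) : 0 ≤ (csqrt z).re := by
  rw [csqrt, one_div, cpow_inv_two_re]
  exact Real.sqrt_nonneg _

lemma norm_le_norm_add_of_re_mul_nonneg_of_im_mul_nonneg {a b : ℂ}
    (hre : 0 ≤ a.re * b.re) (him : 0 ≤ a.im * b.im) : ‖b‖ ≤ ‖a + b‖ := by
  rw [← sq_le_sq₀ (norm_nonneg _) (norm_nonneg _), Complex.sq_norm, Complex.sq_norm,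
    normSq_apply, normSq_apply, add_re, add_im]
  nlinarith [mul_self_nonneg a.re, mul_self_nonneg a.im]

lemma norm_le_norm_sub_of_sq_eq_ofReal_add_sq {s u : ℂ} {r : ℝ} (hs : s ^ 2 = r + u ^ 2)
    (hs_re : 0 ≤ s.re) (hu : u.re < 0) : ‖u‖ ≤ ‖s - u‖ := by
  have him : s.re * s.im = u.re * u.im := by
    have := congrArg Complex.im hs
    simp only [sq, mul_im, add_im, ofReal_im] at this
    linarith
  rw [sub_eq_add_neg, ← norm_neg u]
  refine norm_le_norm_add_of_re_mul_nonneg_of_im_mul_nonneg ?_ ?_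
  · rw [neg_re]; nlinarith
  · rw [neg_im]
    rcases hs_re.eq_or_lt with h | h
    · have : u.im = 0 := by
        rw [← h, zero_mul, eq_comm, mul_eq_zero] at him
        exact him.resolve_left hu.ne
      simp [this]
    · refine nonneg_of_mul_nonneg_right ?_ h
      rw [show s.re * (s.im * -u.im) = -u.re * (u.im * u.im) by linear_combination -u.im * him]
      exact mul_nonneg (neg_nonneg.2 hu.le) (mul_self_nonneg _)

lemma norm_add_le_of_sq_eq_ofReal_add_sq {s u : ℂ} {r : ℝ} (hs : s ^ 2 = r + u ^ 2)
    (hs_re : 0 ≤ s.re) (hu : u.re < 0) : ‖s + u‖ ≤ |r| / ‖u‖ := by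
  have hu0 : 0 < ‖u‖ := norm_pos_iff.2 (by rintro rfl; simp at hu)
  have hprod : (s + u) * (s - u) = r := by linear_combination hs
  rw [le_div_iff₀ hu0, ← Real.norm_eq_abs, ← Complex.norm_real, ← hprod, norm_mul]
  exact mul_le_mul_of_nonneg_left (norm_le_norm_sub_of_sq_eq_ofReal_add_sq hs hs_re hu)
    (norm_nonneg _)

lemma norm_csqrt_one_add_sub_one_le (u : ℂ) : ‖csqrt (1 + u) - 1‖ ≤ ‖u‖ := by
  have hprod : (csqrt (1 + u) - 1) * (csqrt (1 + u) + 1) = u := by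
    linear_combination csqrt_sq (1 + u)
  have h1 : 1 ≤ ‖csqrt (1 + u) + 1‖ := by
    refine le_trans ?_ (re_le_norm _)
    simp [csqrt_re_nonneg]
  calc ‖csqrt (1 + u) - 1‖ ≤ ‖csqrt (1 + u) - 1‖ * ‖csqrt (1 + u) + 1‖ :=
        le_mul_of_one_le_right (norm_nonneg _) h1
    _ = ‖u‖ := by rw [← norm_mul, hprod]

lemma norm_eq_one_of_sq_eq_neg_one {ζ : ℂ} (hζ : ζ ^ 2 = -1) : ‖ζ‖ = 1 := by
  have h := congrArg norm hζ
  rwa [norm_pow, norm_neg, norm_one, pow_eq_one_iff_of_nonneg (norm_nonneg _) two_ne_zero] at h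

lemma I_mul_mul_kA (A : ℝ) (l : ℂ) : I * A * kA A l = -A * csqrt (1 / (A : ℂ) ^ 2 - l ^ 2) := by
  rw [kA]
  linear_combination (A : ℂ) * csqrt (1 / (A : ℂ) ^ 2 - l ^ 2) * I_sq

lemma norm_I_mul_mul_kA_sub_le {A : ℝ} (hA : 0 < A) {ζ l : ℂ} (hζ : ζ ^ 2 = -1)
    (hl : (ζ * l).re < 0) : ‖I * A * kA A l - ζ * (l * A)‖ ≤ ‖l * A‖⁻¹ := by
  have hsq : csqrt (1 / (A : ℂ) ^ 2 - l ^ 2) ^ 2 = ((1 / A ^ 2 : ℝ) : ℂ) + (ζ * l) ^ 2 := by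
    rw [csqrt_sq]; push_cast; linear_combination -l ^ 2 * hζ
  have hbound := norm_add_le_of_sq_eq_ofReal_add_sq hsq (csqrt_re_nonneg _) hl
  rw [norm_mul ζ, norm_eq_one_of_sq_eq_neg_one hζ, one_mul,
    abs_of_pos (by positivity : (0 : ℝ) < 1 / A ^ 2)] at hbound
  calc ‖I * A * kA A l - ζ * (l * A)‖ = A * ‖csqrt (1 / (A : ℂ) ^ 2 - l ^ 2) + ζ * l‖ := by
        rw [I_mul_mul_kA, show -(A : ℂ) * csqrt (1 / (A : ℂ) ^ 2 - l ^ 2) - ζ * (l * A)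
          = -A * (csqrt (1 / (A : ℂ) ^ 2 - l ^ 2) + ζ * l) by ring, norm_mul, norm_neg,
          norm_real, Real.norm_of_nonneg hA.le]
    _ ≤ A * (1 / A ^ 2 / ‖l‖) := mul_le_mul_of_nonneg_left hbound hA.le
    _ = ‖l * A‖⁻¹ := by
        rw [norm_mul, norm_real, Real.norm_of_nonneg hA.le]; field_simp

section

-- `x` stands for `λA` and `m` for `i A k_A(λ)`.

variable {ζ x m : ℂ} (hζ : ζ ^ 2 = -1) (hx : 4 ≤ ‖x‖) (hm : ‖m - ζ * x‖ ≤ ‖x‖⁻¹)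
include hζ hx hm

lemma half_norm_le_norm_sub {c : ℂ} (hc : ‖c‖ ≤ 1) : ‖x‖ / 2 ≤ ‖m - c‖ := by
  have hinv : ‖x‖⁻¹ ≤ 1 / 4 := by rw [one_div]; exact inv_anti₀ (by norm_num) hx
  have h := norm_sub_norm_le (ζ * x) (m - c)
  rw [norm_mul, norm_eq_one_of_sq_eq_neg_one hζ, one_mul,
    show ζ * x - (m - c) = c - (m - ζ * x) by ring] at h
  linarith [norm_sub_le c (m - ζ * x)]

lemma norm_sB_inv_sub_one_sub_I_le : ‖sB (1 / m - 1) - I‖ ≤ 2 / ‖x‖ := by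
  have hxpos : 0 < ‖x‖ := by linarith
  have hm0 := half_norm_le_norm_sub hζ hx hm (c := 0) (by simp)
  rw [sub_zero] at hm0
  calc ‖sB (1 / m - 1) - I‖ = ‖csqrt (1 + -(1 / m)) - 1‖ := by
        rw [sB, show -(1 / m - 1) = 1 + -(1 / m) by ring, ← mul_sub_one, norm_mul, norm_I,
          one_mul]
    _ ≤ ‖1 / m‖ := by simpa only [norm_neg] using norm_csqrt_one_add_sub_one_le (-(1 / m))
    _ ≤ 2 / ‖x‖ := by
        rw [norm_div, norm_one, div_le_div_iff₀ (by linarith) hxpos]; linarith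

lemma norm_div_one_sub_sub_le : ‖x / (1 - m) - ζ‖ ≤ 3 / ‖x‖ := by
  have hxpos : 0 < ‖x‖ := by linarith
  have h1m := half_norm_le_norm_sub hζ hx hm (c := 1) (by simp)
  rw [← norm_neg (m - 1), neg_sub] at h1m
  have h1m0 : 1 - m ≠ 0 := norm_pos_iff.1 (by linarith)
  have hnum : x - (1 - m) * ζ = ζ * ((m - ζ * x) - 1) := by linear_combination x * hζ
  calc ‖x / (1 - m) - ζ‖ = ‖(m - ζ * x) - 1‖ / ‖1 - m‖ := by
        rw [div_sub' h1m0, hnum, norm_div, norm_mul, norm_eq_one_of_sq_eq_neg_one hζ, one_mul]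
    _ ≤ (‖x‖⁻¹ + 1) / (‖x‖ / 2) := by
        gcongr
        exact (norm_sub_le _ _).trans (by rw [norm_one]; linarith)
    _ ≤ 3 / ‖x‖ := by
        rw [div_le_div_iff₀ (by positivity) hxpos]
        have : ‖x‖⁻¹ * ‖x‖ = 1 := inv_mul_cancel₀ hxpos.ne'
        nlinarith

lemma norm_sB_mul_div_one_sub_sub_le : ‖sB (1 / m - 1) * (x / (1 - m)) - I * ζ‖ ≤ 8 / ‖x‖ := by
  have hxpos : 0 < ‖x‖ := by linarith
  set s := sB (1 / m - 1)
  have hs := norm_sB_inv_sub_one_sub_I_le hζ hx hm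
  have hd := norm_div_one_sub_sub_le hζ hx hm
  have hs_le : ‖s‖ ≤ 2 := by
    have : 2 / ‖x‖ ≤ 1 := by rw [div_le_one hxpos]; linarith
    linarith [norm_le_norm_add_norm_sub' s I, norm_I]
  calc ‖s * (x / (1 - m)) - I * ζ‖ = ‖s * (x / (1 - m) - ζ) + ζ * (s - I)‖ := by
        congr 1; ring
    _ ≤ ‖s‖ * ‖x / (1 - m) - ζ‖ + ‖s - I‖ := by
        refine (norm_add_le _ _).trans ?_
        rw [norm_mul, norm_mul ζ, norm_eq_one_of_sq_eq_neg_one hζ, one_mul]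
    _ ≤ 2 * (3 / ‖x‖) + 2 / ‖x‖ := by gcongr
    _ = 8 / ‖x‖ := by ring

end

lemma norm_of_fin_two_symm_le {p q : ℂ} {r : ℝ} (hp : ‖p‖ ≤ r) (hq : ‖q‖ ≤ r) :
    ‖!![p, q; q, p]‖ ≤ r := by
  rw [Matrix.norm_le_iff ((norm_nonneg _).trans hp)]
  intro i j
  fin_cases i <;> fin_cases j <;> simpa

lemma norm_EA_sub_le {A : ℝ} (hA : 0 < A) {ζ l : ℂ} (hζ : ζ ^ 2 = -1) (hl : (ζ * l).re < 0)
    (hlA : 4 ≤ ‖l * A‖) :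
    ‖EA A l - ((Real.sqrt 2 : ℝ) : ℂ)⁻¹ • !![I * ζ, I; I, I * ζ]‖ ≤ 8 / ‖l * A‖ := by
  have hm := norm_I_mul_mul_kA_sub_le hA hζ hl
  set c : ℂ := ((Real.sqrt 2 : ℝ) : ℂ)⁻¹
  set s := sB (1 / (I * A * kA A l) - 1)
  set d := l * A / (1 - I * A * kA A l)
  have hc : ‖c‖ ≤ 1 := by
    rw [norm_inv, norm_real, Real.norm_of_nonneg (Real.sqrt_nonneg _)]
    exact inv_le_one_of_one_le₀ (Real.one_le_sqrt.2 one_le_two)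
  have hEA : EA A l - c • !![I * ζ, I; I, I * ζ]
      = c • !![s * d - I * ζ, s - I; s - I, s * d - I * ζ] := by
    ext i j; fin_cases i <;> fin_cases j <;> simp [EA, s, d, c] <;> ring
  rw [hEA]
  refine (norm_smul_le _ _).trans (le_trans ?_ (one_mul _).le)
  refine mul_le_mul hc (norm_of_fin_two_symm_le ?_ ?_) (norm_nonneg _) zero_le_one
  · exact norm_sB_mul_div_one_sub_sub_le hζ hlA hm
  · exact (norm_sB_inv_sub_one_sub_I_le hζ hlA hm).trans (by gcongr; norm_num)

lemma EA_sub_isBigO {A : ℝ} (hA : 0 < A) {ζ : ℂ} (hζ : ζ ^ 2 = -1) :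
    (fun l : ℂ => EA A l - ((Real.sqrt 2 : ℝ) : ℂ)⁻¹ • !![I * ζ, I; I, I * ζ])
      =O[Bornology.cobounded ℂ ⊓ 𝓟 {l : ℂ | (ζ * l).re < 0}] (fun l : ℂ => 1 / ‖l‖) := by
  refine Asymptotics.IsBigO.of_bound (8 / A) ?_
  filter_upwards [(eventually_cobounded_le_norm (4 / A)).filter_mono inf_le_left,
    mem_inf_of_right (mem_principal_self _)] with l hl hζl
  have hlA : 4 ≤ ‖l * A‖ := by
    rw [norm_mul, norm_real, Real.norm_of_nonneg hA.le, ← div_le_iff₀ hA]; exact hl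
  refine (norm_EA_sub_le hA hζ hζl hlA).trans (le_of_eq ?_)
  rw [norm_mul, norm_real, Real.norm_of_nonneg hA.le, Real.norm_of_nonneg (by positivity)]
  field_simp

/-- asymptotics of E_A as λ → ∞ in the open upper and lower half-planes. -/
theorem stmt_10 (A : ℝ) (hA : 0 < A) :
    ((fun l : ℂ => EA A l - (((Real.sqrt 2 : ℝ) : ℂ)⁻¹) •
        !![(-1 : ℂ), Complex.I; Complex.I, -1])
      =O[Bornology.cobounded ℂ ⊓ Filter.principal {z : ℂ | 0 < z.im}]
        (fun l : ℂ => 1 / ‖l‖)) ∧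
    ((fun l : ℂ => EA A l - (((Real.sqrt 2 : ℝ) : ℂ)⁻¹) •
        !![(1 : ℂ), Complex.I; Complex.I, 1])
      =O[Bornology.cobounded ℂ ⊓ Filter.principal {z : ℂ | z.im < 0}]
        (fun l : ℂ => 1 / ‖l‖)) := by
  constructor
  · convert EA_sub_isBigO hA (ζ := I) I_sq using 5 <;> simp
  · convert EA_sub_isBigO hA (ζ := -I) (by rw [neg_sq, I_sq]) using 5 <;> simp
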